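/- Let f₀(φ) = 1 + 5φ + 109φ² + 3317φ³ + ⋯ be the unique power-series solution (with constant term 1) of the Picard–Fuchs equation L f = 0 at φ=0. Then the unique solution of the form f₁ = f₀·(g(φ) + log φ) with g a power series vanishing at 0 has g(φ) = 14φ + 287φ² + O(φ³), so that the mirror map is q = φ exp(g(φ)) = φ + 14φ² + 385φ³ + O(φ⁴). -/

import Mathlib

open PowerSeries

/-- The logarithmic derivative D = φ d/dφ on formal power series. -/
noncomputable def Dlog (f : PowerSeries ℚ) : PowerSeries ℚ :=
  PowerSeries.mk fun n => (n : ℚ) * PowerSeries.coeff n f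

/-- The Picard–Fuchs operator L = Σᵢ Aᵢ(φ) D^i of the pfaffian quotient family. -/
noncomputable def PFop (f : PowerSeries ℚ) : PowerSeries ℚ :=
  (1 - 57 * X - 289 * X ^ 2 + X ^ 3) * (X - 3) ^ 2 * Dlog (Dlog (Dlog (Dlog f)))
    + 4 * X * (X - 3) * (85 + 867 * X - 149 * X ^ 2 + X ^ 3) * Dlog (Dlog (Dlog f))
    + 2 * X * (-408 - 7597 * X + 2353 * X ^ 2 - 239 * X ^ 3 + 3 * X ^ 4) * Dlog (Dlog f)
    + 2 * X * (-153 - 4773 * X + 675 * X ^ 2 - 87 * X ^ 3 + 2 * X ^ 4) * Dlog f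
    + X * (-45 - 2166 * X + 12 * X ^ 2 - 26 * X ^ 3 + X ^ 4) * f

/-- The logarithmic derivative on the module of expressions a + b·log φ, represented
as pairs (a, b) of power series: D(a + b log φ) = (D a + b) + (D b) log φ. -/
noncomputable def DlogPair (p : PowerSeries ℚ × PowerSeries ℚ) :
    PowerSeries ℚ × PowerSeries ℚ :=
  (Dlog p.1 + p.2, Dlog p.2)

/-- Multiplication of a log-pair by a power series. -/
noncomputable def smulPair (s : PowerSeries ℚ) (p : PowerSeries ℚ × PowerSeries ℚ) :
    PowerSeries ℚ × PowerSeries ℚ :=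
  (s * p.1, s * p.2)

/-- The Picard–Fuchs operator acting on expressions a + b·log φ. -/
noncomputable def PFopPair (p : PowerSeries ℚ × PowerSeries ℚ) :
    PowerSeries ℚ × PowerSeries ℚ :=
  smulPair ((1 - 57 * X - 289 * X ^ 2 + X ^ 3) * (X - 3) ^ 2)
      (DlogPair (DlogPair (DlogPair (DlogPair p))))
    + smulPair (4 * X * (X - 3) * (85 + 867 * X - 149 * X ^ 2 + X ^ 3))
      (DlogPair (DlogPair (DlogPair p)))
    + smulPair (2 * X * (-408 - 7597 * X + 2353 * X ^ 2 - 239 * X ^ 3 + 3 * X ^ 4))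
      (DlogPair (DlogPair p))
    + smulPair (2 * X * (-153 - 4773 * X + 675 * X ^ 2 - 87 * X ^ 3 + 2 * X ^ 4))
      (DlogPair p)
    + smulPair (X * (-45 - 2166 * X + 12 * X ^ 2 - 26 * X ^ 3 + X ^ 4)) p

/-! The fundamental period `f₀` and the function `g` are determined degree by degree: the
coefficient of `φⁿ` in `L f` is `9 n⁴ aₙ` plus terms in `a₀, …, aₙ₋₁`, so for `n = 1, 2` the
equation `L f₀ = 0` fixes `a₁ = 5`, `a₂ = 109`. Writing `f₁ = f₀ g + f₀ log φ`, the `log φ`-free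
part of `L f₁ = 0` reads `L (f₀ g) + L' f₀ = 0`, where `L' = Σ i Aᵢ Dⁱ⁻¹ = PFopDeriv` is the formal
derivative of `L` in `D = φ d/dφ`; its coefficients of `φ` and `φ²` give `g₁ = 14` and
`g₂ = 287`. Finally, with `g(0) = 0` the coefficient of `φ³` in `φ exp g` is `g₂ + g₁² / 2 = 385`.
-/

@[simp]
lemma coeff_Dlog (n : ℕ) (f : PowerSeries ℚ) : coeff n (Dlog f) = n * coeff n f :=
  coeff_mk _ _

lemma Dlog_add (a b : PowerSeries ℚ) : Dlog (a + b) = Dlog a + Dlog b := by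
  ext n
  simp only [coeff_Dlog, map_add, mul_add]

lemma coeff_X_mul (n : ℕ) (f : PowerSeries ℚ) :
    coeff n (X * f) = if 1 ≤ n then coeff (n - 1) f else 0 := by
  rw [← coeff_X_pow_mul', pow_one]

lemma coeff_two_mul (a b : PowerSeries ℚ) :
    coeff 2 (a * b) = constantCoeff a * coeff 2 b + coeff 1 a * coeff 1 b
      + coeff 2 a * constantCoeff b := by
  rw [coeff_mul, Finset.Nat.sum_antidiagonal_eq_sum_range_succ_mk]
  simp [Finset.sum_range_succ, add_assoc]

noncomputable def PFopDeriv (f : PowerSeries ℚ) : PowerSeries ℚ :=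
  4 * ((1 - 57 * X - 289 * X ^ 2 + X ^ 3) * (X - 3) ^ 2) * Dlog (Dlog (Dlog f))
    + 3 * (4 * X * (X - 3) * (85 + 867 * X - 149 * X ^ 2 + X ^ 3)) * Dlog (Dlog f)
    + 2 * (2 * X * (-408 - 7597 * X + 2353 * X ^ 2 - 239 * X ^ 3 + 3 * X ^ 4)) * Dlog f
    + 2 * X * (-153 - 4773 * X + 675 * X ^ 2 - 87 * X ^ 3 + 2 * X ^ 4) * f

lemma PFopPair_fst (a b : PowerSeries ℚ) : (PFopPair (a, b)).1 = PFop a + PFopDeriv b := by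
  simp only [PFopPair, smulPair, DlogPair, Prod.fst_add, Dlog_add, PFop, PFopDeriv]
  ring

lemma coeff_one_PFop (f : PowerSeries ℚ) :
    coeff 1 (PFop f) = 9 * coeff 1 f - 45 * constantCoeff f := by
  unfold PFop
  ring_nf
  simp [← map_ofNat C, coeff_X_pow_mul', coeff_X_mul]
  ring

lemma coeff_two_PFop (f : PowerSeries ℚ) :
    coeff 2 (PFop f) = 144 * coeff 2 f - 2706 * coeff 1 f - 2166 * constantCoeff f := by
  unfold PFop
  ring_nf
  simp [← map_ofNat C, coeff_X_pow_mul', coeff_X_mul]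
  ring

lemma coeff_one_PFopDeriv (f : PowerSeries ℚ) :
    coeff 1 (PFopDeriv f) = 36 * coeff 1 f - 306 * constantCoeff f := by
  unfold PFopDeriv
  ring_nf
  simp [← map_ofNat C, coeff_X_pow_mul', coeff_X_mul]
  ring

lemma coeff_two_PFopDeriv (f : PowerSeries ℚ) :
    coeff 2 (PFopDeriv f) = 288 * coeff 2 f - 7074 * coeff 1 f - 9546 * constantCoeff f := by
  unfold PFopDeriv
  ring_nf
  simp [← map_ofNat C, coeff_X_pow_mul', coeff_X_mul]
  ring

lemma coeff_one_two_of_PFop_eq_zero {f : PowerSeries ℚ} (hf : constantCoeff f = 1)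
    (hL : PFop f = 0) : coeff 1 f = 5 ∧ coeff 2 f = 109 := by
  have h1 := coeff_one_PFop f
  have h2 := coeff_two_PFop f
  rw [hL, map_zero, hf] at h1 h2
  constructor <;> linarith

lemma coeff_one_two_of_PFop_mul_add_PFopDeriv_eq_zero {f g : PowerSeries ℚ}
    (hf₀ : constantCoeff f = 1) (hf₁ : coeff 1 f = 5) (hf₂ : coeff 2 f = 109)
    (hg : constantCoeff g = 0) (hL : PFop (f * g) + PFopDeriv f = 0) :
    coeff 1 g = 14 ∧ coeff 2 g = 287 := by
  have h1 := congrArg (coeff 1) hL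
  have h2 := congrArg (coeff 2) hL
  simp only [map_add, map_zero, coeff_one_PFop, coeff_two_PFop, coeff_one_PFopDeriv,
    coeff_two_PFopDeriv, coeff_one_mul, coeff_two_mul, map_mul, hf₀, hf₁, hf₂, hg] at h1 h2
  constructor <;> linarith

lemma coeff_X_mul_taylor_exp {g : PowerSeries ℚ} (hg : constantCoeff g = 0) :
    coeff 1 (X * (1 + g + (1/2 : ℚ) • g ^ 2 + (1/6 : ℚ) • g ^ 3)) = 1 ∧
    coeff 2 (X * (1 + g + (1/2 : ℚ) • g ^ 2 + (1/6 : ℚ) • g ^ 3)) = coeff 1 g ∧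
    coeff 3 (X * (1 + g + (1/2 : ℚ) • g ^ 2 + (1/6 : ℚ) • g ^ 3)) =
      coeff 2 g + coeff 1 g ^ 2 / 2 := by
  obtain ⟨h, rfl⟩ := X_dvd_iff.mpr hg
  simp [mul_pow, coeff_X_pow_mul']
  ring

/-- If f₀ is the power-series solution of the Picard–Fuchs equation with constant
term 1, and f₁ = f₀·(g + log φ) is also a solution with g a power series vanishing
at 0, then g = 14φ + 287φ² + O(φ³) and the mirror map q = φ·exp(g) satisfies
q = φ + 14φ² + 385φ³ + O(φ⁴). -/
theorem stmt_11 (f₀ g : PowerSeries ℚ)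
    (hf₀ : PowerSeries.constantCoeff f₀ = 1)
    (hg : PowerSeries.constantCoeff g = 0)
    (hPF : PFop f₀ = 0)
    (hlog : PFopPair (f₀ * g, f₀) = 0) :
    PowerSeries.coeff 1 g = 14 ∧ PowerSeries.coeff 2 g = 287 ∧
    (PowerSeries.coeff 1 (X * (1 + g + (1/2 : ℚ) • g ^ 2 + (1/6 : ℚ) • g ^ 3)) = 1 ∧
     PowerSeries.coeff 2 (X * (1 + g + (1/2 : ℚ) • g ^ 2 + (1/6 : ℚ) • g ^ 3)) = 14 ∧
     PowerSeries.coeff 3 (X * (1 + g + (1/2 : ℚ) • g ^ 2 + (1/6 : ℚ) • g ^ 3)) = 385) := by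
  obtain ⟨hf₁, hf₂⟩ := coeff_one_two_of_PFop_eq_zero hf₀ hPF
  have hfrob : PFop (f₀ * g) + PFopDeriv f₀ = 0 := by
    rw [← PFopPair_fst, hlog, Prod.fst_zero]
  obtain ⟨hg₁, hg₂⟩ := coeff_one_two_of_PFop_mul_add_PFopDeriv_eq_zero hf₀ hf₁ hf₂ hg hfrob
  obtain ⟨hq₁, hq₂, hq₃⟩ := coeff_X_mul_taylor_exp hg
  refine ⟨hg₁, hg₂, hq₁, hq₂.trans hg₁, ?_⟩
  rw [hq₃, hg₁, hg₂]
  norm_num
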